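/- arXiv:2501.00270 — 5 statements merged into one kernel-verified Lean document; each statement's English description precedes it below -/
import Mathlib

section
/- Let ψ be an analytic wavelet in L¹ ∩ L² with ψ̂ Lipschitz continuous on [0,∞), and Φ a stationary Gaussian process with spectral density p satisfying p(λ) ≤ C₁|λ|^{-(1+γ)} for all λ ≠ 0, for some γ ∈ (0,2) and C₁ > 0. Then for all s₁, s₂ > 0 with |s₁ - s₂| ≤ 1, the canonical distance d(s₁,s₂) = (∫_0^∞ |ψ̂(s₁λ) - ψ̂(s₂λ)|² p(λ) dλ)^{1/2} satisfies d(s₁,s₂) ≤ C₂ |s₁ - s₂|^{γ/2}, where C₂ = max{1, [C₁(1/γ + 2/(2-γ))(2‖ψ̂‖_∞)^{2-γ}‖ψ̂‖_Lip^γ + 2‖ψ̂‖_∞² Var(Φ(0))]^{1/2}}. -/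
open MeasureTheory Set

/-!
Lipschitz continuity and boundedness of `ψ̂` give
`‖ψ̂(s₁λ) - ψ̂(s₂λ)‖² ≤ min ((K|s₁-s₂|λ)², (2Mψ)²)`. Against the tail bound `C₁λ^{-(1+γ)}`
this truncated quadratic integrates in closed form by splitting at the crossover
`Λ = 2Mψ / (K|s₁-s₂|)`: both pieces scale like `|s₁-s₂|^γ`, and the total
`C₁(1/γ + 1/(2-γ))(2Mψ)^{2-γ}(K|s₁-s₂|)^γ` is at most `C₂²|s₁-s₂|^γ`.
-/
section TruncatedPowerIntegral

variable {a b γ : ℝ}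

theorem integral_Ioc_min_sq_mul_rpow (ha : 0 < a) (hb : 0 < b) (hγ : γ < 2) :
    IntegrableOn (fun l : ℝ ↦ min ((a * l) ^ 2) (b ^ 2) * l ^ (-(1 + γ))) (Ioc 0 (b / a)) ∧
      ∫ l in Ioc 0 (b / a), min ((a * l) ^ 2) (b ^ 2) * l ^ (-(1 + γ))
        = a ^ 2 * (b / a) ^ (2 - γ) / (2 - γ) := by
  have heq : EqOn (fun l : ℝ ↦ min ((a * l) ^ 2) (b ^ 2) * l ^ (-(1 + γ)))
      (fun l ↦ a ^ 2 * l ^ (1 - γ)) (Ioc 0 (b / a)) := by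
    rintro l ⟨hl0, hl⟩
    have hab : a * l ≤ b := (le_div_iff₀' ha).1 hl
    dsimp only
    rw [min_eq_left (pow_le_pow_left₀ (by positivity) hab 2), mul_pow, mul_assoc,
      ← Real.rpow_natCast l 2, ← Real.rpow_add hl0]
    congr 2
    push_cast
    ring
  have hint : IntegrableOn (fun l : ℝ ↦ a ^ 2 * l ^ (1 - γ)) (Ioc 0 (b / a)) :=
    ((intervalIntegrable_iff_integrableOn_Ioc_of_le (by positivity)).1
      (intervalIntegral.intervalIntegrable_rpow' (by linarith))).const_mul _
  refine ⟨hint.congr_fun heq.symm measurableSet_Ioc, ?_⟩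
  rw [setIntegral_congr_fun measurableSet_Ioc heq, integral_const_mul,
    ← intervalIntegral.integral_of_le (by positivity), integral_rpow (Or.inl (by linarith)),
    Real.zero_rpow (by linarith)]
  ring_nf

theorem integral_Ioi_div_min_sq_mul_rpow (ha : 0 < a) (hb : 0 < b) (hγ : 0 < γ) :
    IntegrableOn (fun l : ℝ ↦ min ((a * l) ^ 2) (b ^ 2) * l ^ (-(1 + γ))) (Ioi (b / a)) ∧
      ∫ l in Ioi (b / a), min ((a * l) ^ 2) (b ^ 2) * l ^ (-(1 + γ))
        = b ^ 2 * (b / a) ^ (-γ) / γ := by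
  have heq : EqOn (fun l : ℝ ↦ min ((a * l) ^ 2) (b ^ 2) * l ^ (-(1 + γ)))
      (fun l ↦ b ^ 2 * l ^ (-(1 + γ))) (Ioi (b / a)) := by
    intro l hl
    have hab : b ≤ a * l := (div_le_iff₀' ha).1 hl.le
    simp only [min_eq_right (pow_le_pow_left₀ hb.le hab 2)]
  have hexp : -(1 + γ) < -1 := by linarith
  have hint : IntegrableOn (fun l : ℝ ↦ b ^ 2 * l ^ (-(1 + γ))) (Ioi (b / a)) :=
    (integrableOn_Ioi_rpow_of_lt hexp (by positivity)).const_mul _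
  refine ⟨hint.congr_fun heq.symm measurableSet_Ioi, ?_⟩
  rw [setIntegral_congr_fun measurableSet_Ioi heq, integral_const_mul,
    integral_Ioi_rpow_of_lt hexp (by positivity)]
  ring_nf

theorem integral_Ioi_zero_min_sq_mul_rpow (ha : 0 ≤ a) (hb : 0 ≤ b) (hγ₀ : 0 < γ)
    (hγ₂ : γ < 2) :
    IntegrableOn (fun l : ℝ ↦ min ((a * l) ^ 2) (b ^ 2) * l ^ (-(1 + γ))) (Ioi 0) ∧
      ∫ l in Ioi 0, min ((a * l) ^ 2) (b ^ 2) * l ^ (-(1 + γ))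
        = (1 / γ + 1 / (2 - γ)) * a ^ γ * b ^ (2 - γ) := by
  rcases ha.eq_or_lt with rfl | ha
  · simp [Real.zero_rpow hγ₀.ne', min_eq_left (sq_nonneg b)]
  rcases hb.eq_or_lt with rfl | hb
  · simp [Real.zero_rpow (sub_pos.2 hγ₂).ne', min_eq_right (sq_nonneg (a * _))]
  obtain ⟨hint₁, heq₁⟩ := integral_Ioc_min_sq_mul_rpow ha hb hγ₂
  obtain ⟨hint₂, heq₂⟩ := integral_Ioi_div_min_sq_mul_rpow ha hb hγ₀
  rw [← Ioc_union_Ioi_eq_Ioi (div_pos hb ha).le]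
  refine ⟨hint₁.union hint₂, ?_⟩
  rw [setIntegral_union (Ioc_disjoint_Ioi le_rfl) measurableSet_Ioi hint₁ hint₂, heq₁, heq₂,
    Real.div_rpow hb.le ha.le, Real.div_rpow hb.le ha.le, Real.rpow_sub ha, Real.rpow_sub hb, Real.rpow_neg ha.le, Real.rpow_neg hb.le,
    Real.rpow_two, Real.rpow_two]
  have : 0 < a ^ γ := Real.rpow_pos_of_pos ha γ
  have : 0 < b ^ γ := Real.rpow_pos_of_pos hb γ
  field_simp
  ring

end TruncatedPowerIntegral

section DilationIncrement

variable {E : Type*} [NormedAddCommGroup E] {ψ : ℝ → E} {M : ℝ} {K : NNReal}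

theorem norm_sub_comp_mul_sq_le_min (hψ : ∀ x ∈ Ici (0 : ℝ), ‖ψ x‖ ≤ M)
    (hLip : LipschitzOnWith K ψ (Ici 0)) {s₁ s₂ l : ℝ} (hs₁ : 0 ≤ s₁) (hs₂ : 0 ≤ s₂)
    (hl : 0 ≤ l) :
    ‖ψ (s₁ * l) - ψ (s₂ * l)‖ ^ 2 ≤ min ((K * |s₁ - s₂| * l) ^ 2) ((2 * M) ^ 2) := by
  have hmem₁ : s₁ * l ∈ Ici (0 : ℝ) := mul_nonneg hs₁ hl
  have hmem₂ : s₂ * l ∈ Ici (0 : ℝ) := mul_nonneg hs₂ hl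
  have hlip : ‖ψ (s₁ * l) - ψ (s₂ * l)‖ ≤ K * |s₁ - s₂| * l := by
    have := hLip.dist_le_mul _ hmem₁ _ hmem₂
    rwa [dist_eq_norm, Real.dist_eq, ← sub_mul, abs_mul, abs_of_nonneg hl, ← mul_assoc] at this
  have hbdd : ‖ψ (s₁ * l) - ψ (s₂ * l)‖ ≤ 2 * M :=
    (norm_sub_le _ _).trans (by linarith [hψ _ hmem₁, hψ _ hmem₂])
  exact le_min (pow_le_pow_left₀ (norm_nonneg _) hlip 2)
    (pow_le_pow_left₀ (norm_nonneg _) hbdd 2)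

theorem setIntegral_norm_sub_comp_mul_sq_mul_le {p : ℝ → ℝ} {C₁ γ : ℝ}
    (hp_nonneg : ∀ l, 0 ≤ p l) (hp_tail : ∀ l, 0 < l → p l ≤ C₁ * l ^ (-(1 + γ)))
    (hγ₀ : 0 < γ) (hγ₂ : γ < 2) (hψ : ∀ x ∈ Ici (0 : ℝ), ‖ψ x‖ ≤ M)
    (hLip : LipschitzOnWith K ψ (Ici 0)) {s₁ s₂ : ℝ} (hs₁ : 0 ≤ s₁) (hs₂ : 0 ≤ s₂) :
    ∫ l in Ioi 0, ‖ψ (s₁ * l) - ψ (s₂ * l)‖ ^ 2 * p l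
      ≤ C₁ * ((1 / γ + 1 / (2 - γ)) * (K * |s₁ - s₂|) ^ γ * (2 * M) ^ (2 - γ)) := by
  have hM : 0 ≤ 2 * M := by linarith [(norm_nonneg _).trans (hψ 0 self_mem_Ici)]
  obtain ⟨hint, hval⟩ :=
    integral_Ioi_zero_min_sq_mul_rpow (by positivity) hM hγ₀ hγ₂ (a := K * |s₁ - s₂|)
  have hbound : ∀ l ∈ Ioi (0 : ℝ), ‖ψ (s₁ * l) - ψ (s₂ * l)‖ ^ 2 * p l
      ≤ C₁ * (min ((K * |s₁ - s₂| * l) ^ 2) ((2 * M) ^ 2) * l ^ (-(1 + γ))) := by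
    intro l hl
    calc ‖ψ (s₁ * l) - ψ (s₂ * l)‖ ^ 2 * p l
        ≤ min ((K * |s₁ - s₂| * l) ^ 2) ((2 * M) ^ 2) * (C₁ * l ^ (-(1 + γ))) :=
          mul_le_mul (norm_sub_comp_mul_sq_le_min hψ hLip hs₁ hs₂ (le_of_lt hl))
            (hp_tail l hl) (hp_nonneg l) (le_min (sq_nonneg _) (sq_nonneg _))
      _ = _ := by ring
  calc ∫ l in Ioi 0, ‖ψ (s₁ * l) - ψ (s₂ * l)‖ ^ 2 * p l
      ≤ ∫ l in Ioi 0, C₁ * (min ((K * |s₁ - s₂| * l) ^ 2) ((2 * M) ^ 2) * l ^ (-(1 + γ))) :=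
        integral_mono_of_nonneg (.of_forall fun l ↦ by positivity [hp_nonneg l])
          (hint.const_mul C₁) (ae_restrict_of_forall_mem measurableSet_Ioi hbound)
    _ = _ := by rw [integral_const_mul, hval]

end DilationIncrement

theorem Real.sqrt_le_mul_rpow_half {x A C h γ : ℝ} (hx : x ≤ A * h ^ γ) (hh : 0 ≤ h)
    (hC : √A ≤ C) : √x ≤ C * h ^ (γ / 2) := by
  calc √x ≤ √(A * h ^ γ) := Real.sqrt_le_sqrt hx
    _ = √A * h ^ (γ / 2) := by
      rw [Real.sqrt_mul' _ (Real.rpow_nonneg hh γ), Real.sqrt_eq_rpow (h ^ γ),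
        ← Real.rpow_mul hh, mul_one_div]
    _ ≤ C * h ^ (γ / 2) := mul_le_mul_of_nonneg_right hC (Real.rpow_nonneg hh _)

theorem stmt6_general (ψhat : ℝ → ℂ) (p : ℝ → ℝ)
    (hp_nonneg : ∀ l : ℝ, 0 ≤ p l)
    (γ C₁ : ℝ) (hγ : γ ∈ Set.Ioo (0:ℝ) 2)
    (hp_tail : ∀ l : ℝ, l ≠ 0 → p l ≤ C₁ * |l| ^ (-(1 + γ)))
    (Mψ : ℝ) (hMψ : ∀ l : ℝ, ‖ψhat l‖ ≤ Mψ)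
    (K : NNReal) (hLip : LipschitzOnWith K ψhat (Set.Ici 0))
    (VarΦ : ℝ) (hVar : VarΦ = ∫ l : ℝ, p l)
    (C₂ : ℝ)
    (hC₂ : C₂ = max 1 (Real.sqrt
      (C₁ * (1 / γ + 2 / (2 - γ)) * (2 * Mψ) ^ (2 - γ) * (K : ℝ) ^ (γ : ℝ)
        + 2 * Mψ ^ 2 * VarΦ))) :
    ∀ s₁ s₂ : ℝ, 0 < s₁ → 0 < s₂ → |s₁ - s₂| ≤ 1 →
      Real.sqrt (∫ l in Set.Ioi (0:ℝ), ‖ψhat (s₁ * l) - ψhat (s₂ * l)‖ ^ 2 * p l)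
        ≤ C₂ * |s₁ - s₂| ^ (γ / 2) := by
  intro s₁ s₂ hs₁ hs₂ _
  obtain ⟨hγ₀, hγ₂⟩ := hγ
  have hp_tail_pos : ∀ l, 0 < l → p l ≤ C₁ * l ^ (-(1 + γ)) := fun l hl ↦ by
    simpa [abs_of_pos hl] using hp_tail l hl.ne'
  have hC₁ : 0 ≤ C₁ := by simpa using (hp_nonneg 1).trans (hp_tail_pos 1 one_pos)
  have hM : 0 ≤ Mψ := (norm_nonneg _).trans (hMψ 0)
  have hVar₀ : 0 ≤ VarΦ := hVar ▸ integral_nonneg hp_nonneg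
  refine Real.sqrt_le_mul_rpow_half ?_ (abs_nonneg _) (hC₂ ▸ le_max_right _ _)
  refine (setIntegral_norm_sub_comp_mul_sq_mul_le hp_nonneg hp_tail_pos hγ₀ hγ₂
    (fun x _ ↦ hMψ x) hLip hs₁.le hs₂.le).trans ?_
  rw [Real.mul_rpow K.coe_nonneg (abs_nonneg _)]
  have hslack : 0 ≤ C₁ * (1 / (2 - γ)) * (2 * Mψ) ^ (2 - γ) * (K : ℝ) ^ γ * |s₁ - s₂| ^ γ := by
    have := sub_pos.2 hγ₂; positivity
  have hVar_term : 0 ≤ 2 * Mψ ^ 2 * VarΦ * |s₁ - s₂| ^ γ := by positivity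
  linear_combination hslack + hVar_term

/-- Hölder continuity of the canonical distance of the analytic wavelet transform:
if `ψ̂` is bounded by `Mψ` and Lipschitz on `[0,∞)` with constant `K`, and the spectral
density `p` of `Φ` satisfies `p(λ) ≤ C₁|λ|^{-(1+γ)}` for `λ ≠ 0` with `γ ∈ (0,2)`, then
for `s₁, s₂ > 0` with `|s₁-s₂| ≤ 1`,
`d(s₁,s₂) = (∫_0^∞ |ψ̂(s₁λ)-ψ̂(s₂λ)|² p(λ) dλ)^{1/2} ≤ C₂ |s₁-s₂|^{γ/2}`, where
`C₂ = max{1, √(C₁(1/γ + 2/(2-γ))(2Mψ)^{2-γ} K^γ + 2 Mψ² Var(Φ(0)))}` and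
`Var(Φ(0)) = ∫_ℝ p`. -/
theorem stmt6 (ψhat : ℝ → ℂ) (p : ℝ → ℝ)
    (hp_nonneg : ∀ l : ℝ, 0 ≤ p l)
    (hp_int : Integrable p (volume : Measure ℝ))
    (γ C₁ : ℝ) (hγ : γ ∈ Set.Ioo (0:ℝ) 2) (hC₁ : 0 < C₁)
    (hp_tail : ∀ l : ℝ, l ≠ 0 → p l ≤ C₁ * |l| ^ (-(1 + γ)))
    (Mψ : ℝ) (hMψ : ∀ l : ℝ, ‖ψhat l‖ ≤ Mψ)
    (K : NNReal) (hLip : LipschitzOnWith K ψhat (Set.Ici 0))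
    (VarΦ : ℝ) (hVar : VarΦ = ∫ l : ℝ, p l)
    (C₂ : ℝ)
    (hC₂ : C₂ = max 1 (Real.sqrt
      (C₁ * (1 / γ + 2 / (2 - γ)) * (2 * Mψ) ^ (2 - γ) * (K : ℝ) ^ (γ : ℝ)
        + 2 * Mψ ^ 2 * VarΦ))) :
    ∀ s₁ s₂ : ℝ, 0 < s₁ → 0 < s₂ → |s₁ - s₂| ≤ 1 →
      Real.sqrt (∫ l in Set.Ioi (0:ℝ), ‖ψhat (s₁ * l) - ψhat (s₂ * l)‖ ^ 2 * p l)
        ≤ C₂ * |s₁ - s₂| ^ (γ / 2) :=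
  stmt6_general ψhat p hp_nonneg γ C₁ hγ hp_tail Mψ hMψ K hLip VarΦ hVar C₂ hC₂
end

section
/- Let ψ be an analytic wavelet such that sup_{λ>0}|ψ̂'(λ)| < ∞ (so |ψ̂(z)| ≤ ‖Dψ̂‖_∞ |z|), and Φ a stationary Gaussian process with finite variance and spectral density p satisfying p(λ) ≤ C₁|λ|^{-(1+γ)} for λ ≠ 0, γ ∈ (0,2). Then for all t ∈ ℝ and sufficiently small s > 0, E[|W_Φ(t,s)|²] = ∫_0^∞ |ψ̂(sλ)|² p(λ) dλ ≤ [‖Dψ̂‖_∞² E[Φ(0)²] + ‖ψ̂‖_∞² C₁ γ^{-1}] · s^{2γ/(2+γ)}. Consequently E[|W_Φ(t,s)|²] → 0 as s → 0⁺. -/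
/-!
Below the cut-off `λ = T := s^{-2/(2+γ)}` the linear bound `‖ψ̂(sλ)‖ ≤ KD·sλ ≤ KD·sT` makes
the integrand at most `KD² (sT)² p(λ)`; above it, `‖ψ̂‖ ≤ Mψ` and the tail of `p` give
`Mψ² C₁ ∫_T^∞ λ^{-(1+γ)} dλ = Mψ² C₁ γ⁻¹ T^{-γ}`. The cut-off is chosen so that
`(sT)² = T^{-γ} = s^{2γ/(2+γ)}`.
-/

open MeasureTheory Set Filter

theorem norm_sub_le_mul_of_hasDerivAt_Ioi {E : Type*} [NormedAddCommGroup E] [NormedSpace ℝ E]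
    {f f' : ℝ → E} {a C : ℝ} (hf : ContinuousWithinAt f (Ioi a) a)
    (hderiv : ∀ l, a < l → HasDerivAt f (f' l) l) (hbound : ∀ l, a < l → ‖f' l‖ ≤ C)
    {x : ℝ} (hx : a ≤ x) : ‖f x - f a‖ ≤ C * (x - a) := by
  rcases hx.eq_or_lt with rfl | hax
  · simp
  have hinterior : ∀ y ∈ Ioc a x, ‖f x - f y‖ ≤ C * (x - y) := fun y hy => by
    have := (convex_Ioi a).norm_image_sub_le_of_norm_hasDerivWithin_le
      (fun l hl => (hderiv l hl).hasDerivWithinAt) hbound hy.1 (show a < x from hax)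
    rwa [Real.norm_eq_abs, abs_of_nonneg (sub_nonneg.2 hy.2)] at this
  have hclosure : a ∈ closure (Ioc a x) := by
    rw [closure_Ioc hax.ne]
    exact left_mem_Icc.2 hax.le
  refine ContinuousWithinAt.closure_le (f := fun y => ‖f x - f y‖) (g := fun y => C * (x - y))
    hclosure ?_ (by fun_prop) hinterior
  exact (continuousWithinAt_const.sub (hf.mono Ioc_subset_Ioi_self)).norm

theorem integral_Ioi_rpow_neg_one_sub {γ T : ℝ} (hγ : 0 < γ) (hT : 0 < T) :
    ∫ l in Ioi T, l ^ (-(1 + γ)) = γ⁻¹ * T ^ (-γ) := by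
  rw [integral_Ioi_rpow_of_lt (by linarith) hT, show -(1 + γ) + 1 = -γ by ring]
  field_simp

theorem setIntegral_Ioi_mul_le_of_split {g p : ℝ → ℝ} {a b C γ T : ℝ} (hγ : 0 < γ)
    (hT : 0 < T) (hC : 0 ≤ C) (hp0 : ∀ l, 0 ≤ p l) (hp : Integrable p) (hg0 : ∀ l, 0 ≤ g l)
    (hlow : ∀ l ∈ Ioc 0 T, g l ≤ a) (hhigh : ∀ l, T < l → g l ≤ b)
    (htail : ∀ l, 0 < l → p l ≤ C * l ^ (-(1 + γ))) :
    ∫ l in Ioi 0, g l * p l ≤ a * (∫ l, p l) + b * C * (γ⁻¹ * T ^ (-γ)) := by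
  have ha : 0 ≤ a := (hg0 T).trans (hlow T ⟨hT, le_rfl⟩)
  have hb : 0 ≤ b := (hg0 (T + 1)).trans (hhigh _ (lt_add_one T))
  set tail : ℝ → ℝ := fun l => b * C * l ^ (-(1 + γ))
  have htail_int : IntegrableOn tail (Ioi T) :=
    (integrableOn_Ioi_rpow_of_lt (by linarith) hT).const_mul _
  have hmajorant_int : IntegrableOn (fun l => a * p l + (Ioi T).indicator tail l) (Ioi 0) :=
    (hp.const_mul a).integrableOn.add (htail_int.integrable_indicator measurableSet_Ioi).restrict
  have hpointwise : ∀ l ∈ Ioi (0 : ℝ), g l * p l ≤ a * p l + (Ioi T).indicator tail l := by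
    intro l (hl : 0 < l)
    by_cases hlT : l ≤ T
    · have hind : 0 ≤ (Ioi T).indicator tail l :=
        indicator_nonneg (fun y (hy : T < y) => by have := hT.trans hy; positivity) l
      nlinarith [hlow l ⟨hl, hlT⟩, hp0 l]
    · rw [indicator_of_mem (show l ∈ Ioi T from not_le.1 hlT)]
      have := mul_le_mul (hhigh l (not_le.1 hlT)) (htail l hl) (hp0 l) hb
      nlinarith [hp0 l]
  calc ∫ l in Ioi 0, g l * p l
      ≤ ∫ l in Ioi 0, (a * p l + (Ioi T).indicator tail l) :=
        integral_mono_of_nonneg (Eventually.of_forall fun l => mul_nonneg (hg0 l) (hp0 l))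
          hmajorant_int ((ae_restrict_iff' measurableSet_Ioi).2 (Eventually.of_forall hpointwise))
    _ = a * (∫ l in Ioi 0, p l) + b * C * ∫ l in Ioi T, l ^ (-(1 + γ)) := by
        rw [integral_add (hp.const_mul a).integrableOn
            (htail_int.integrable_indicator measurableSet_Ioi).restrict,
          integral_const_mul, setIntegral_indicator measurableSet_Ioi, Ioi_inter_Ioi,
          max_eq_right hT.le, integral_const_mul]
    _ ≤ a * (∫ l, p l) + b * C * (γ⁻¹ * T ^ (-γ)) := by
        rw [integral_Ioi_rpow_neg_one_sub hγ hT]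
        exact add_le_add_left
          (mul_le_mul_of_nonneg_left (setIntegral_le_integral hp (Eventually.of_forall hp0)) ha) _

theorem setIntegral_Ioi_norm_comp_mul_sq_mul_le {E : Type*} [NormedAddCommGroup E]
    {ψ : ℝ → E} {p : ℝ → ℝ} {K M C γ s : ℝ} (hγ : 0 < γ) (hs : 0 < s) (hC : 0 ≤ C)
    (hψ_lin : ∀ x, 0 ≤ x → ‖ψ x‖ ≤ K * x) (hψ_bdd : ∀ x, ‖ψ x‖ ≤ M)
    (hp0 : ∀ l, 0 ≤ p l) (hp : Integrable p) (htail : ∀ l, 0 < l → p l ≤ C * l ^ (-(1 + γ))) :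
    ∫ l in Ioi 0, ‖ψ (s * l)‖ ^ 2 * p l
      ≤ (K ^ 2 * (∫ l, p l) + M ^ 2 * C * γ⁻¹) * s ^ (2 * γ / (2 + γ)) := by
  set T := s ^ (-2 / (2 + γ))
  have hT : 0 < T := Real.rpow_pos_of_pos hs _
  have hK : 0 ≤ K := by simpa using (norm_nonneg _).trans (hψ_lin 1 zero_le_one)
  have hexp : 1 + -2 / (2 + γ) = γ / (2 + γ) := by
    field_simp
    ring
  have hsT : (s * T) ^ 2 = s ^ (2 * γ / (2 + γ)) := by
    rw [← Real.rpow_one_add' hs.le (by rw [hexp]; positivity), hexp, ← Real.rpow_natCast,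
      ← Real.rpow_mul hs.le]
    congr 1
    push_cast
    ring
  have hTγ : T ^ (-γ) = s ^ (2 * γ / (2 + γ)) := by
    rw [← Real.rpow_mul hs.le]
    congr 1
    field_simp
  have hlow : ∀ l ∈ Ioc 0 T, ‖ψ (s * l)‖ ^ 2 ≤ K ^ 2 * s ^ (2 * γ / (2 + γ)) := by
    intro l ⟨hl, hlT⟩
    rw [← hsT, ← mul_pow]
    gcongr
    exact (hψ_lin _ (by positivity)).trans (by gcongr)
  have hhigh : ∀ l, T < l → ‖ψ (s * l)‖ ^ 2 ≤ M ^ 2 := fun l _ =>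
    pow_le_pow_left₀ (norm_nonneg _) (hψ_bdd _) 2
  calc ∫ l in Ioi 0, ‖ψ (s * l)‖ ^ 2 * p l
      ≤ K ^ 2 * s ^ (2 * γ / (2 + γ)) * (∫ l, p l) + M ^ 2 * C * (γ⁻¹ * T ^ (-γ)) :=
        setIntegral_Ioi_mul_le_of_split hγ hT hC hp0 hp (fun _ => by positivity) hlow hhigh htail
    _ = (K ^ 2 * (∫ l, p l) + M ^ 2 * C * γ⁻¹) * s ^ (2 * γ / (2 + γ)) := by
        rw [hTγ]
        ring

/-- Small-scale behaviour of the variance of the AWT: if `ψ̂(0) = 0`, `ψ̂` is continuous on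
`[0,∞)`, differentiable on `(0,∞)` with derivative bounded by `KD` (so `|ψ̂(z)| ≤ KD·|z|`),
`ψ̂` is bounded by `Mψ`, and the spectral density `p ≥ 0` is integrable with tail bound
`p(λ) ≤ C₁|λ|^{-(1+γ)}`, `γ ∈ (0,2)`, then for all sufficiently small `s > 0`,
`E[|W_Φ(t,s)|²] = ∫_0^∞ |ψ̂(sλ)|² p(λ) dλ ≤ [KD² E[Φ(0)²] + Mψ² C₁ γ⁻¹] s^{2γ/(2+γ)}`;
consequently the integral tends to `0` as `s → 0⁺`. -/
theorem stmt9 (ψhat : ℝ → ℂ) (Dψ : ℝ → ℂ) (p : ℝ → ℝ)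
    (hψ0 : ψhat 0 = 0)
    (hψcont : ContinuousOn ψhat (Set.Ici 0))
    (hderiv : ∀ l : ℝ, 0 < l → HasDerivAt ψhat (Dψ l) l)
    (KD : ℝ) (hKD : ∀ l : ℝ, 0 < l → ‖Dψ l‖ ≤ KD)
    (Mψ : ℝ) (hMψ : ∀ l : ℝ, ‖ψhat l‖ ≤ Mψ)
    (hp_nonneg : ∀ l : ℝ, 0 ≤ p l)
    (hp_int : Integrable p (volume : Measure ℝ))
    (γ C₁ : ℝ) (hγ : γ ∈ Set.Ioo (0:ℝ) 2) (hC₁ : 0 < C₁)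
    (hp_tail : ∀ l : ℝ, l ≠ 0 → p l ≤ C₁ * |l| ^ (-(1 + γ)))
    (VarΦ : ℝ) (hVar : VarΦ = ∫ l : ℝ, p l) :
    (∃ s₀ : ℝ, 0 < s₀ ∧ ∀ s : ℝ, 0 < s → s ≤ s₀ →
        (∫ l in Set.Ioi (0:ℝ), ‖ψhat (s * l)‖ ^ 2 * p l)
          ≤ (KD ^ 2 * VarΦ + Mψ ^ 2 * C₁ * γ⁻¹) * s ^ (2 * γ / (2 + γ)))
      ∧ Tendsto (fun s : ℝ => ∫ l in Set.Ioi (0:ℝ), ‖ψhat (s * l)‖ ^ 2 * p l)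
          (nhdsWithin 0 (Set.Ioi 0)) (nhds 0) := by
  have hψ_lin : ∀ x, 0 ≤ x → ‖ψhat x‖ ≤ KD * x := fun x hx => by
    simpa [hψ0] using norm_sub_le_mul_of_hasDerivAt_Ioi
      ((hψcont 0 self_mem_Ici).mono Ioi_subset_Ici_self) hderiv hKD hx
  have hp_tail' : ∀ l, 0 < l → p l ≤ C₁ * l ^ (-(1 + γ)) := fun l hl => by
    simpa [abs_of_pos hl] using hp_tail l hl.ne'
  have hbound : ∀ s, 0 < s → ∫ l in Ioi 0, ‖ψhat (s * l)‖ ^ 2 * p l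
      ≤ (KD ^ 2 * VarΦ + Mψ ^ 2 * C₁ * γ⁻¹) * s ^ (2 * γ / (2 + γ)) := fun s hs => by
    rw [hVar]
    exact setIntegral_Ioi_norm_comp_mul_sq_mul_le hγ.1 hs hC₁.le hψ_lin hMψ hp_nonneg hp_int
      hp_tail'
  refine ⟨⟨1, one_pos, fun s hs _ => hbound s hs⟩, ?_⟩
  have hrpow : Tendsto (fun s : ℝ => (KD ^ 2 * VarΦ + Mψ ^ 2 * C₁ * γ⁻¹) * s ^ (2 * γ / (2 + γ)))
      (nhdsWithin 0 (Ioi 0)) (nhds 0) := by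
    have hε : 0 < 2 * γ / (2 + γ) := by have := hγ.1; positivity
    simpa [Real.zero_rpow hε.ne'] using
      ((Real.continuous_rpow_const hε.le).tendsto 0).mono_left nhdsWithin_le_nhds |>.const_mul
        (KD ^ 2 * VarΦ + Mψ ^ 2 * C₁ * γ⁻¹)
  refine squeeze_zero' (Eventually.of_forall fun s => ?_) ?_ hrpow
  · exact setIntegral_nonneg measurableSet_Ioi fun l _ => mul_nonneg (by positivity) (hp_nonneg l)
  · filter_upwards [self_mem_nhdsWithin] with s hs using hbound s hs
end

section
/- Chaining bound (Dudley-type theorem for the AWT): Let X : [0,∞) → ℂ be a centered complex Gaussian process with X(0) = 0 and continuous sample paths, such that for all s₁ ≠ s₂ the normalized increment |X(s₁) - X(s₂)|²/d²(s₁,s₂) is Exp(1)-distributed, where d(s₁,s₂)² = E[|X(s₁)-X(s₂)|²]. Suppose there exist finite sets π_j ⊂ [0,∞) (j ≥ 0), with π₀ = {0} and cardinalities |π_j| ≤ N_j, such that sup_{s>0} inf_{s'∈π_j} d(s,s') ≤ D^{1-j} for a constant D ≥ 2. Then E[ sup_{s>0} |X(s)| ] ≤ (4/3) Σ_{j=0}^∞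 D^{1-j} √(ln(2^{j+1} N_j N_{j+1})), provided the series converges. -/
open MeasureTheory Set Filter ProbabilityTheory

/-- A family of complex random variables is (jointly) Gaussian if every finite real-linear
combination of real and imaginary parts of its members has a Gaussian distribution on `ℝ`. -/
def IsComplexGaussianFamily {Ω : Type*} [MeasurableSpace Ω] (P : Measure Ω)
    {ι : Type*} (W : ι → Ω → ℂ) : Prop :=
  ∀ (n : ℕ) (idx : Fin n → ι) (a b : Fin n → ℝ), ∃ (m : ℝ) (v : NNReal),
    Measure.map (fun ω => ∑ k, (a k * (W (idx k) ω).re + b k * (W (idx k) ω).im)) P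
      = gaussianReal m v

/-!
Chaining. Let `c_j s ∈ π_j` be a point with `d(s, c_j s) ≤ D^{1-j}` and
`M_j = max_{q ∈ π_{j+1}} |X q - X (c_j q)|`. Telescoping along `q, c_j q, c_{j-1} c_j q, …, 0`
bounds `|X t|` by `∑ M_j` for every net point `t`; since `X (c_k s) → X s` in probability and the
paths are continuous, this bound extends to `sup_{s > 0} |X s|`. Each `M_j` is a maximum of at most
`N_{j+1}` variables with tails `exp (-v²/δ_j²)`, `δ_j = D^{1-j}`, so with `a_j = δ_j √L_j` and
`L_j ≥ log (2 |π_{j+1}|)` a union bound gives `P (M_j ≥ a_j u) ≤ 2^{-u²}` for `u ≥ 1`, whence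
`E M_j ≤ a_j (1 + ∫_1^∞ 2^{-u²} du) ≤ (4/3) a_j`.
-/

open scoped ENNReal NNReal Topology

lemma Finset.measurable_sup_apply {Ω ι : Type*} [MeasurableSpace Ω] (T : Finset ι)
    {Y : ι → Ω → ℝ≥0} (hY : ∀ i, Measurable (Y i)) :
    Measurable fun ω ↦ T.sup fun i ↦ Y i ω := by
  have : Measurable (T.sup Y) :=
    Finset.sup_induction measurable_const (fun _ h₁ _ h₂ ↦ h₁.sup h₂) fun i _ ↦ hY i
  simpa only [← Finset.sup_apply] using this

lemma nnnorm_le_sum_finset_sup_nnnorm_sub {T E : Type*} [SeminormedAddCommGroup E] {F : T → E}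
    {t₀ : T} (hF : F t₀ = 0) {π : ℕ → Finset T} (hπ₀ : ∀ t ∈ π 0, t = t₀) {c : ℕ → T → T}
    (hc : ∀ j, ∀ q ∈ π (j + 1), q ≠ t₀ → c j q ∈ π j) :
    ∀ k, ∀ t ∈ π k, ‖F t‖₊ ≤ ∑ j ∈ Finset.range k, (π (j + 1)).sup fun q ↦ ‖F q - F (c j q)‖₊ := by
  intro k
  induction k with
  | zero => intro t ht; simp [hπ₀ t ht, hF]
  | succ k ih =>
    intro t ht
    rcases eq_or_ne t t₀ with rfl | hne
    · simp [hF]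
    rw [Finset.sum_range_succ]
    exact (nnnorm_le_nnnorm_add_nnnorm_sub' (F t) (F (c k t))).trans
      (add_le_add (ih _ (hc k t ht hne)) (Finset.le_sup (f := fun q ↦ ‖F q - F (c k q)‖₊) ht))

lemma iSup_pos_enorm_le_of_forall_rat {E : Type*} [SeminormedAddCommGroup E] {F : ℝ → E}
    (hF : Continuous F) {B : ℝ≥0∞} (h : ∀ q : ℚ, 0 < q → ‖F q‖ₑ ≤ B) :
    ⨆ s : {s : ℝ // 0 < s}, ‖F s‖ₑ ≤ B := by
  refine iSup_le fun ⟨s, hs⟩ ↦ ?_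
  have hclosed : IsClosed {s | ‖F s‖ₑ ≤ B} :=
    isClosed_le (continuous_enorm.comp hF) continuous_const
  have hdense : Ioi 0 ⊆ closure (Ioi 0 ∩ range ((↑) : ℚ → ℝ)) :=
    Rat.denseRange_cast.open_subset_closure_inter isOpen_Ioi
  refine closure_minimal ?_ hclosed (hdense hs)
  rintro _ ⟨hx, q, rfl⟩
  exact h q (by exact_mod_cast mem_Ioi.1 hx)

section
open Real

lemma expMeasure_Ici {r t : ℝ} (hr : 0 < r) (ht : 0 ≤ t) :
    expMeasure r (Ici t) = ENNReal.ofReal (exp (-(r * t))) := by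
  have := isProbabilityMeasure_expMeasure hr
  have hcdf := cdf_expMeasure_eq hr t
  rw [if_pos ht, cdf_eq_real] at hcdf
  rw [expMeasure, gammaMeasure, measure_congr Ioi_ae_eq_Ici.symm, ← gammaMeasure, ← expMeasure,
    ← ENNReal.ofReal_toReal (measure_ne_top _ _), ← measureReal_def, ← compl_Iic,
    probReal_compl_eq_one_sub measurableSet_Iic, hcdf, sub_sub_cancel]

lemma tendsto_rpow_one_sub_natCast_nhdsGT_zero {D : ℝ} (hD : 1 < D) :
    Tendsto (fun j : ℕ ↦ D ^ ((1 : ℝ) - j)) atTop (𝓝[>] 0) := by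
  refine tendsto_nhdsWithin_iff.2 ⟨(tendsto_rpow_atBot_of_base_gt_one D hD).comp ?_,
    .of_forall fun j ↦ rpow_pos_of_pos (by linarith) _⟩
  simp_rw [sub_eq_add_neg]
  exact tendsto_atBot_add_const_left _ 1 (tendsto_neg_atTop_atBot.comp tendsto_natCast_atTop_atTop)

lemma natCast_mul_exp_neg_sq_div_sq_le {n : ℕ} {δ L v : ℝ} (hn : 0 < n) (hδ : 0 < δ)
    (hL : log (2 * n) ≤ L) (hv : δ * √L ≤ v) :
    n * exp (-(v ^ 2 / δ ^ 2)) ≤ 2 ^ (-(v / (δ * √L)) ^ 2) := by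
  have hn₁ : (1 : ℝ) ≤ n := by exact_mod_cast hn
  have hlog2 : 0 < log 2 := log_pos one_lt_two
  have hlogn : 0 ≤ log n := log_nonneg hn₁
  rw [log_mul two_ne_zero (by positivity)] at hL
  have hL₀ : 0 < L := by linarith
  set u := v / (δ * √L)
  have hu : 1 ≤ u := (one_le_div (by positivity)).mpr hv
  have hvu : v ^ 2 / δ ^ 2 = u ^ 2 * L := by
    simp only [u, div_pow, mul_pow, sq_sqrt hL₀.le]
    field_simp
  have hexpo : log n - u ^ 2 * L ≤ log 2 * -u ^ 2 := by
    nlinarith [mul_le_mul_of_nonneg_left hL (sq_nonneg u), one_le_pow₀ (n := 2) hu]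
  rw [rpow_def_of_pos two_pos, hvu, ← exp_log (by positivity : (0 : ℝ) < n), ← exp_add]
  exact exp_le_exp.mpr (by linarith)

lemma log_two_mul_le_log_two_pow_mul_mul {n n' m k : ℕ} (j : ℕ) (hn : 0 < n) (hn' : 0 < n')
    (hn'm : n' ≤ m) (hnk : n ≤ k) : log (2 * n) ≤ log (2 ^ (j + 1) * m * k) := by
  have hm : (1 : ℝ) ≤ m := by exact_mod_cast hn'.trans_le hn'm
  refine log_le_log (by positivity) ?_
  calc (2 : ℝ) * n = 2 ^ 1 * 1 * n := by ring
    _ ≤ 2 ^ (j + 1) * m * k := by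
      gcongr
      · norm_num
      · omega

lemma setLIntegral_Ioi_two_rpow_neg_sq_le {a : ℝ} (ha : 0 < a) :
    ∫⁻ t in Ioi a, ENNReal.ofReal (2 ^ (-(t / a) ^ 2)) ≤ ENNReal.ofReal (a / 3) := by
  have hlog2 : 0 < log 2 := log_pos one_lt_two
  set b := -(3 * log 2 / a)
  have hb : b < 0 := neg_neg_of_pos (by positivity)
  -- `u² ≥ 3u - 9/4` (the tangent at `u = 3/2`) trades the Gaussian tail for an exponential one
  have hmaj : ∀ t, (2 : ℝ) ^ (-(t / a) ^ 2) ≤ exp (9 / 4 * log 2) * exp (b * t) := by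
    intro t
    rw [rpow_def_of_pos two_pos, ← exp_add, exp_le_exp,
      show b * t = -(3 * log 2) * (t / a) by simp only [b]; ring]
    nlinarith [sq_nonneg (t / a - 3 / 2)]
  have hint : ∫ t in Ioi a, exp (9 / 4 * log 2) * exp (b * t)
      = exp (9 / 4 * log 2) * exp (-(3 * log 2)) * a / (3 * log 2) := by
    rw [integral_const_mul, integral_exp_mul_Ioi hb]
    simp only [b]
    field_simp
  have hnum : exp (9 / 4 * log 2) * exp (-(3 * log 2)) ≤ log 2 := by
    rw [← exp_add, show 9 / 4 * log 2 + -(3 * log 2) = -(3 / 4 * log 2) by ring, exp_neg,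
      inv_le_iff_one_le_mul₀ (exp_pos _)]
    nlinarith [add_one_le_exp (3 / 4 * log 2), log_two_gt_d9]
  calc ∫⁻ t in Ioi a, ENNReal.ofReal (2 ^ (-(t / a) ^ 2))
      ≤ ∫⁻ t in Ioi a, ENNReal.ofReal (exp (9 / 4 * log 2) * exp (b * t)) := by
        gcongr with t; exact hmaj t
    _ = ENNReal.ofReal (exp (9 / 4 * log 2) * exp (-(3 * log 2)) * a / (3 * log 2)) := by
        rw [← hint, ofReal_integral_eq_lintegral_ofReal]
        · exact (integrableOn_exp_mul_Ioi hb a).const_mul _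
        · exact .of_forall fun t ↦ by positivity
    _ ≤ ENNReal.ofReal (a / 3) := by
        apply ENNReal.ofReal_le_ofReal
        rw [div_le_div_iff₀ (by positivity) three_pos]
        nlinarith

variable {Ω : Type*} [MeasurableSpace Ω] {P : Measure Ω}

lemma ne_zero_of_map_sq_div_sq_eq_expMeasure {Y : Ω → ℝ} {d : ℝ}
    (h : P.map (fun ω ↦ Y ω ^ 2 / d ^ 2) = expMeasure 1) : d ≠ 0 := by
  rintro rfl
  have h0 := congrArg (· (Ici 1)) h
  simp [Measure.map_const, expMeasure_Ici one_pos zero_le_one] at h0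
  exact (exp_pos _).not_ge h0

lemma measure_norm_ge_eq_exp_of_map_eq_expMeasure {E : Type*} [NormedAddCommGroup E]
    {Y : Ω → E} {d : ℝ} (h : P.map (fun ω ↦ ‖Y ω‖ ^ 2 / d ^ 2) = expMeasure 1) {v : ℝ}
    (hv : 0 ≤ v) : P {ω | v ≤ ‖Y ω‖} = ENNReal.ofReal (exp (-(v ^ 2 / d ^ 2))) := by
  have hd : 0 < d ^ 2 := by
    have := ne_zero_of_map_sq_div_sq_eq_expMeasure h
    positivity
  -- a non-measurable map pushes `P` forward to `0`, not to a probability measure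
  have hmeas : AEMeasurable (fun ω ↦ ‖Y ω‖ ^ 2 / d ^ 2) P := by
    by_contra hY
    have := isProbabilityMeasure_expMeasure one_pos
    rw [Measure.map_of_not_aemeasurable hY] at h
    exact IsProbabilityMeasure.ne_zero _ h.symm
  have hset : {ω | v ≤ ‖Y ω‖} = (fun ω ↦ ‖Y ω‖ ^ 2 / d ^ 2) ⁻¹' Ici (v ^ 2 / d ^ 2) := by
    ext ω
    simp only [mem_ofPred_eq, mem_preimage, mem_Ici, div_le_div_iff_of_pos_right hd]
    exact (pow_le_pow_iff_left₀ hv (norm_nonneg _) two_ne_zero).symm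
  rw [hset, ← Measure.map_apply_of_aemeasurable hmeas measurableSet_Ici, h,
    expMeasure_Ici one_pos (by positivity), one_mul]

lemma measure_norm_sub_ge_le {T E : Type*} [NormedAddCommGroup E] {X : T → Ω → E} {s₁ s₂ : T}
    {d δ v : ℝ} (hd : 0 ≤ d) (hdδ : d ≤ δ)
    (hexp : s₁ ≠ s₂ → P.map (fun ω ↦ ‖X s₁ ω - X s₂ ω‖ ^ 2 / d ^ 2) = expMeasure 1)
    (hv : 0 < v) :
    P {ω | v ≤ ‖X s₁ ω - X s₂ ω‖} ≤ ENNReal.ofReal (exp (-(v ^ 2 / δ ^ 2))) := by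
  rcases eq_or_ne s₁ s₂ with rfl | hne
  · simp [hv.not_ge]
  have hd₀ : 0 < d := hd.lt_of_ne' (ne_zero_of_map_sq_div_sq_eq_expMeasure (hexp hne))
  rw [measure_norm_ge_eq_exp_of_map_eq_expMeasure (hexp hne) hv.le]
  gcongr

lemma tendstoInMeasure_of_measure_norm_sub_ge_le_exp {E : Type*} [SeminormedAddCommGroup E]
    {f : ℕ → Ω → E} {g : Ω → E} {δ : ℕ → ℝ} (hδ : Tendsto δ atTop (𝓝[>] 0))
    (htail : ∀ k, ∀ v : ℝ, 0 < v →
      P {ω | v ≤ ‖g ω - f k ω‖} ≤ ENNReal.ofReal (exp (-(v ^ 2 / δ k ^ 2)))) :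
    TendstoInMeasure P f atTop g := by
  refine tendstoInMeasure_iff_enorm.2 fun ε hε hε_top ↦ ?_
  have hv : 0 < ε.toReal := ENNReal.toReal_pos hε.ne' hε_top
  have hset : ∀ k, {ω | ε ≤ ‖f k ω - g ω‖ₑ} = {ω | ε.toReal ≤ ‖g ω - f k ω‖} := fun k ↦ by
    ext ω
    rw [mem_ofPred_eq, mem_ofPred_eq, ← ofReal_norm, norm_sub_rev,
      ENNReal.le_ofReal_iff_toReal_le hε_top (norm_nonneg _)]
  have hexp : Tendsto (fun k ↦ exp (-(ε.toReal ^ 2 / δ k ^ 2))) atTop (𝓝 0) := by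
    have : Tendsto (fun k ↦ (ε.toReal * (δ k)⁻¹) ^ 2) atTop atTop :=
      (tendsto_pow_atTop two_ne_zero).comp
        ((tendsto_inv_nhdsGT_zero.comp hδ).const_mul_atTop hv)
    refine tendsto_exp_atBot.comp (tendsto_neg_atTop_atBot.comp ?_)
    simpa only [mul_pow, inv_pow, div_eq_mul_inv] using this
  have hlim := ENNReal.tendsto_ofReal hexp
  rw [ENNReal.ofReal_zero] at hlim
  simp_rw [hset]
  exact tendsto_of_tendsto_of_tendsto_of_le_of_le tendsto_const_nhds hlim (fun _ ↦ bot_le)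
    fun k ↦ htail k _ hv

lemma ae_enorm_le_of_tendstoInMeasure {E : Type*} [SeminormedAddCommGroup E] {f : ℕ → Ω → E}
    {g : Ω → E} {S : Ω → ℝ≥0∞} (hfg : TendstoInMeasure P f atTop g)
    (hS : ∀ k, ∀ᵐ ω ∂P, ‖f k ω‖ₑ ≤ S ω) :
    ∀ᵐ ω ∂P, ‖g ω‖ₑ ≤ S ω := by
  obtain ⟨ns, -, hns⟩ := hfg.exists_seq_tendsto_ae
  filter_upwards [hns, ae_all_iff.2 hS] with ω hω hSω
  exact le_of_tendsto ((continuous_enorm.tendsto _).comp hω) (.of_forall fun i ↦ hSω (ns i))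

variable [IsProbabilityMeasure P]

lemma lintegral_ofReal_le_add_setLIntegral_Ioi {f : Ω → ℝ} (hf_nn : 0 ≤ᵐ[P] f)
    (hf : AEMeasurable f P) {a : ℝ} (ha : 0 ≤ a) :
    ∫⁻ ω, ENNReal.ofReal (f ω) ∂P ≤ ENNReal.ofReal a + ∫⁻ t in Ioi a, P {ω | t ≤ f ω} := by
  rw [lintegral_eq_lintegral_meas_le P hf_nn hf, ← Ioc_union_Ioi_eq_Ioi ha,
    lintegral_union measurableSet_Ioi Ioc_disjoint_Ioi_same]
  gcongr
  calc ∫⁻ t in Ioc 0 a, P {ω | t ≤ f ω} ≤ ∫⁻ _ in Ioc 0 a, 1 := lintegral_mono fun _ ↦ prob_le_one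
    _ = ENNReal.ofReal a := by simp

lemma lintegral_finset_sup_le_of_measure_ge_le {ι : Type*} (T : Finset ι) (Y : ι → Ω → ℝ≥0)
    (hY : ∀ i, Measurable (Y i)) {a : ℝ} (ha : 0 < a)
    (htail : ∀ i ∈ T, ∀ t, a ≤ t →
      P {ω | t ≤ Y i ω} ≤ ENNReal.ofReal (2 ^ (-(t / a) ^ 2)) / T.card) :
    ∫⁻ ω, (T.sup fun i ↦ Y i ω : ℝ≥0) ∂P ≤ ENNReal.ofReal (4 / 3 * a) := by
  have hunion : ∀ t, a < t → P {ω | t ≤ (T.sup fun i ↦ Y i ω : ℝ≥0)}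
      ≤ ENNReal.ofReal (2 ^ (-(t / a) ^ 2)) := by
    intro t ht
    have hsub : {ω | t ≤ (T.sup fun i ↦ Y i ω : ℝ≥0)} ⊆ ⋃ i ∈ T, {ω | t ≤ Y i ω} := by
      intro ω hω
      rcases T.eq_empty_or_nonempty with rfl | hT
      · simp only [Finset.sup_empty, mem_ofPred_eq, bot_eq_zero', NNReal.coe_zero] at hω
        linarith
      obtain ⟨i, hi, hsup⟩ := T.exists_mem_eq_sup hT fun i ↦ Y i ω
      exact mem_biUnion hi (by simpa [hsup] using hω)
    calc P {ω | t ≤ (T.sup fun i ↦ Y i ω : ℝ≥0)} ≤ ∑ i ∈ T, P {ω | t ≤ Y i ω} :=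
          (measure_mono hsub).trans (measure_biUnion_finset_le T _)
      _ ≤ ∑ _i ∈ T, ENNReal.ofReal (2 ^ (-(t / a) ^ 2)) / T.card :=
          Finset.sum_le_sum fun i hi ↦ htail i hi t ht.le
      _ ≤ ENNReal.ofReal (2 ^ (-(t / a) ^ 2)) := by
          rw [Finset.sum_const, nsmul_eq_mul]; exact ENNReal.mul_div_le
  calc ∫⁻ ω, (T.sup fun i ↦ Y i ω : ℝ≥0) ∂P
      = ∫⁻ ω, ENNReal.ofReal (T.sup fun i ↦ Y i ω : ℝ≥0) ∂P := by simp
    _ ≤ ENNReal.ofReal a + ∫⁻ t in Ioi a, ENNReal.ofReal (2 ^ (-(t / a) ^ 2)) :=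
        (lintegral_ofReal_le_add_setLIntegral_Ioi (.of_forall fun ω ↦ NNReal.coe_nonneg _)
          (measurable_coe_nnreal_real.comp (T.measurable_sup_apply hY)).aemeasurable
          ha.le).trans (add_le_add le_rfl (setLIntegral_mono' measurableSet_Ioi hunion))
    _ ≤ ENNReal.ofReal a + ENNReal.ofReal (a / 3) := by
        gcongr; exact setLIntegral_Ioi_two_rpow_neg_sq_le ha
    _ = ENNReal.ofReal (4 / 3 * a) := by
        rw [← ENNReal.ofReal_add ha.le (by positivity)]; ring_nf

lemma lintegral_finset_sup_le_of_measure_ge_le_exp {ι : Type*} (T : Finset ι)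
    (Y : ι → Ω → ℝ≥0) (hY : ∀ i, Measurable (Y i)) {δ L : ℝ} (hδ : 0 < δ)
    (hL : log (2 * T.card) ≤ L)
    (htail : ∀ i ∈ T, ∀ v : ℝ, 0 < v →
      P {ω | v ≤ Y i ω} ≤ ENNReal.ofReal (exp (-(v ^ 2 / δ ^ 2)))) :
    ∫⁻ ω, (T.sup fun i ↦ Y i ω : ℝ≥0) ∂P ≤ ENNReal.ofReal (4 / 3 * (δ * √L)) := by
  rcases T.eq_empty_or_nonempty with rfl | hT
  · simp
  have hcard : 0 < T.card := hT.card_pos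
  have hL₀ : 0 < L := by
    refine (log_pos ?_).trans_le hL
    have : (1 : ℝ) ≤ T.card := by exact_mod_cast hcard
    linarith
  refine lintegral_finset_sup_le_of_measure_ge_le T Y hY (by positivity) fun i hi t ht ↦ ?_
  rw [ENNReal.le_div_iff_mul_le (by simp [hcard.ne']) (by simp), mul_comm]
  calc (T.card : ℝ≥0∞) * P {ω | t ≤ Y i ω}
      ≤ T.card * ENNReal.ofReal (exp (-(t ^ 2 / δ ^ 2))) := by
        gcongr; exact htail i hi t ((by positivity : 0 < δ * √L).trans_le ht)
    _ = ENNReal.ofReal (T.card * exp (-(t ^ 2 / δ ^ 2))) := by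
        rw [ENNReal.ofReal_mul (by positivity), ENNReal.ofReal_natCast]
    _ ≤ _ := ENNReal.ofReal_le_ofReal (natCast_mul_exp_neg_sq_div_sq_le hcard hδ hL ht)

end

lemma ae_iSup_enorm_le_tsum_finset_sup_nnnorm_sub {Ω E : Type*} [MeasurableSpace Ω] {P : Measure Ω} [NormedAddCommGroup E]
    {X : ℝ → Ω → E} (hX0 : ∀ ω, X 0 ω = 0) (hXcont : ∀ ω, Continuous fun s ↦ X s ω)
    {π : ℕ → Finset ℝ} (hπ0 : π 0 = {0}) (hπnonneg : ∀ j, (π j : Set ℝ) ⊆ Ici 0)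
    {c : ℕ → ℝ → ℝ} (hcπ : ∀ j s, 0 < s → c j s ∈ π j) {δ : ℕ → ℝ}
    (hδ : Tendsto δ atTop (𝓝[>] 0))
    (hincr : ∀ j s, ∀ v : ℝ, 0 < v →
      P {ω | v ≤ ‖X s ω - X (c j s) ω‖} ≤ ENNReal.ofReal (Real.exp (-(v ^ 2 / δ j ^ 2)))) :
    ∀ᵐ ω ∂P, ⨆ s : {s : ℝ // 0 < s}, ‖X s ω‖ₑ
      ≤ ∑' j, (((π (j + 1)).sup fun q ↦ ‖X q ω - X (c j q) ω‖₊ : ℝ≥0) : ℝ≥0∞) := by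
  have hnet : ∀ k, ∀ t ∈ π k, ∀ ω, ‖X t ω‖ₑ
      ≤ ∑' j, (((π (j + 1)).sup fun q ↦ ‖X q ω - X (c j q) ω‖₊ : ℝ≥0) : ℝ≥0∞) := by
    intro k t ht ω
    have hchain := nnnorm_le_sum_finset_sup_nnnorm_sub (F := fun s ↦ X s ω) (hX0 ω)
      (by simp [hπ0]) (fun j q hq hq₀ ↦ hcπ j q ((hπnonneg (j + 1) hq).lt_of_ne' hq₀)) k t ht
    rw [enorm_eq_nnnorm]
    exact (ENNReal.coe_le_coe.2 hchain).trans (by push_cast; exact ENNReal.sum_le_tsum _)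
  have hpoint : ∀ s, 0 < s → ∀ᵐ ω ∂P, ‖X s ω‖ₑ
      ≤ ∑' j, (((π (j + 1)).sup fun q ↦ ‖X q ω - X (c j q) ω‖₊ : ℝ≥0) : ℝ≥0∞) := fun s hs ↦
    ae_enorm_le_of_tendstoInMeasure (f := fun k ↦ X (c k s))
      (tendstoInMeasure_of_measure_norm_sub_ge_le_exp hδ fun k ↦ hincr k s)
      fun k ↦ .of_forall (hnet k _ (hcπ k s hs))
  filter_upwards [ae_all_iff.2 fun q : {q : ℚ // 0 < q} ↦ hpoint q (by exact_mod_cast q.2)]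
    with ω hω
  exact iSup_pos_enorm_le_of_forall_rat (hXcont ω) fun q hq ↦ hω ⟨q, hq⟩

theorem stmt10_general {Ω : Type*} [MeasurableSpace Ω] (P : Measure Ω) [IsProbabilityMeasure P]
    (X : ℝ → Ω → ℂ)
    (hXmeas : ∀ s, Measurable (X s))
    (hX0 : ∀ ω, X 0 ω = 0)
    (hXcont : ∀ ω, Continuous fun s => X s ω)
    (dX : ℝ → ℝ → ℝ)
    (hdX : ∀ s₁ s₂ : ℝ, dX s₁ s₂ = Real.sqrt (∫ ω, ‖X s₁ ω - X s₂ ω‖ ^ 2 ∂P))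
    (hexp : ∀ s₁ s₂ : ℝ, s₁ ≠ s₂ →
      Measure.map (fun ω => ‖X s₁ ω - X s₂ ω‖ ^ 2 / (dX s₁ s₂) ^ 2) P = expMeasure 1)
    (D : ℝ) (hD : 2 ≤ D)
    (π : ℕ → Finset ℝ) (N : ℕ → ℕ)
    (hπ0 : π 0 = {0})
    (hπnonneg : ∀ j, (π j : Set ℝ) ⊆ Set.Ici 0)
    (hπcard : ∀ j, (π j).card ≤ N j)
    (hπnet : ∀ j : ℕ, ∀ s : ℝ, 0 < s → ∃ s' ∈ π j, dX s s' ≤ D ^ ((1:ℝ) - j))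
    (A : ℝ)
    (hA : A = ∑' j : ℕ,
      D ^ ((1:ℝ) - j) * Real.sqrt (Real.log ((2:ℝ) ^ (j + 1) * N j * N (j + 1))))
    (hAsummable : Summable fun j : ℕ =>
      D ^ ((1:ℝ) - j) * Real.sqrt (Real.log ((2:ℝ) ^ (j + 1) * N j * N (j + 1)))) :
    ∫⁻ ω, (⨆ s : {s : ℝ // 0 < s}, ENNReal.ofReal ‖X s.1 ω‖) ∂P
      ≤ ENNReal.ofReal ((4 / 3) * A) := by
  have hδ : ∀ j : ℕ, 0 < D ^ ((1 : ℝ) - j) := fun j ↦ Real.rpow_pos_of_pos (by linarith) _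
  -- `c j s` is a point of `π j` near `s`; off `(0, ∞)` it is `s` itself, a zero increment
  have hproj : ∀ (j : ℕ) s, ∃ p, dX s p ≤ D ^ ((1 : ℝ) - j) ∧ (0 < s → p ∈ π j) := by
    intro j s
    by_cases hs : 0 < s
    · obtain ⟨p, hp, hd⟩ := hπnet j s hs
      exact ⟨p, hd, fun _ ↦ hp⟩
    · exact ⟨s, by simpa [hdX] using (hδ j).le, fun h ↦ absurd h hs⟩
  choose c hcd hcπ using hproj
  have hcard : ∀ j, 0 < (π j).card := fun j ↦
    let ⟨p, hp, _⟩ := hπnet j 1 one_pos; Finset.card_pos.2 ⟨p, hp⟩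
  have hincr : ∀ j s, ∀ v : ℝ, 0 < v → P {ω | v ≤ ‖X s ω - X (c j s) ω‖}
      ≤ ENNReal.ofReal (Real.exp (-(v ^ 2 / (D ^ ((1 : ℝ) - j)) ^ 2))) := fun j s v hv ↦
    measure_norm_sub_ge_le ((hdX _ _).symm ▸ Real.sqrt_nonneg _) (hcd j s) (hexp s (c j s)) hv
  have hsup := ae_iSup_enorm_le_tsum_finset_sup_nnnorm_sub hX0 hXcont hπ0 hπnonneg
    hcπ (tendsto_rpow_one_sub_natCast_nhdsGT_zero (by linarith)) hincr
  calc ∫⁻ ω, (⨆ s : {s : ℝ // 0 < s}, ENNReal.ofReal ‖X s.1 ω‖) ∂P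
      ≤ ∫⁻ ω, ∑' j, (((π (j + 1)).sup fun q ↦ ‖X q ω - X (c j q) ω‖₊ : ℝ≥0) : ℝ≥0∞) ∂P :=
        lintegral_mono_ae (by simpa only [ofReal_norm] using hsup)
    _ = ∑' j, ∫⁻ ω, (((π (j + 1)).sup fun q ↦ ‖X q ω - X (c j q) ω‖₊ : ℝ≥0) : ℝ≥0∞) ∂P :=
        lintegral_tsum fun j ↦ (measurable_coe_nnreal_ennreal.comp
          ((π (j + 1)).measurable_sup_apply fun q ↦
            ((hXmeas q).sub (hXmeas (c j q))).nnnorm)).aemeasurable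
    _ ≤ ∑' j : ℕ, ENNReal.ofReal (4 / 3 * (D ^ ((1 : ℝ) - j) *
          Real.sqrt (Real.log ((2:ℝ) ^ (j + 1) * N j * N (j + 1))))) :=
        ENNReal.tsum_le_tsum fun j ↦ lintegral_finset_sup_le_of_measure_ge_le_exp _ _
          (fun q ↦ ((hXmeas q).sub (hXmeas (c j q))).nnnorm) (hδ j)
          (log_two_mul_le_log_two_pow_mul_mul j (hcard (j + 1)) (hcard j) (hπcard j)
            (hπcard (j + 1)))
          fun q _ ↦ hincr j q
    _ = ENNReal.ofReal ((4 / 3) * A) := by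
        rw [← ENNReal.ofReal_tsum_of_nonneg (fun j ↦ by positivity) (hAsummable.mul_left _),
          tsum_mul_left, hA]

/-- Dudley-type chaining bound: let `X : [0,∞) → ℂ` be a centered complex Gaussian process
with `X(0) = 0`, continuous sample paths, and `Exp(1)`-distributed normalized squared
increments `|X(s₁)-X(s₂)|²/d(s₁,s₂)²`.  If finite nets `π_j ⊆ [0,∞)` with `π₀ = {0}` and
`|π_j| ≤ N_j` satisfy `sup_{s>0} inf_{s'∈π_j} d(s,s') ≤ D^{1-j}` for a constant `D ≥ 2`,
then `E[sup_{s>0}|X(s)|] ≤ (4/3) Σ_j D^{1-j} √(ln(2^{j+1} N_j N_{j+1}))`. -/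
theorem stmt10 {Ω : Type*} [MeasurableSpace Ω] (P : Measure Ω) [IsProbabilityMeasure P]
    (X : ℝ → Ω → ℂ)
    (hXmeas : ∀ s, Measurable (X s))
    (hX0 : ∀ ω, X 0 ω = 0)
    (hXcont : ∀ ω, Continuous fun s => X s ω)
    (hXcentered : ∀ s, ∫ ω, X s ω ∂P = 0)
    (hXgauss : IsComplexGaussianFamily P X)
    (dX : ℝ → ℝ → ℝ)
    (hdX : ∀ s₁ s₂ : ℝ, dX s₁ s₂ = Real.sqrt (∫ ω, ‖X s₁ ω - X s₂ ω‖ ^ 2 ∂P))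
    (hexp : ∀ s₁ s₂ : ℝ, s₁ ≠ s₂ →
      Measure.map (fun ω => ‖X s₁ ω - X s₂ ω‖ ^ 2 / (dX s₁ s₂) ^ 2) P = expMeasure 1)
    (D : ℝ) (hD : 2 ≤ D)
    (π : ℕ → Finset ℝ) (N : ℕ → ℕ)
    (hπ0 : π 0 = {0})
    (hπnonneg : ∀ j, (π j : Set ℝ) ⊆ Set.Ici 0)
    (hπcard : ∀ j, (π j).card ≤ N j)
    (hπnet : ∀ j : ℕ, ∀ s : ℝ, 0 < s → ∃ s' ∈ π j, dX s s' ≤ D ^ ((1:ℝ) - j))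
    (A : ℝ)
    (hA : A = ∑' j : ℕ,
      D ^ ((1:ℝ) - j) * Real.sqrt (Real.log ((2:ℝ) ^ (j + 1) * N j * N (j + 1))))
    (hAsummable : Summable fun j : ℕ =>
      D ^ ((1:ℝ) - j) * Real.sqrt (Real.log ((2:ℝ) ^ (j + 1) * N j * N (j + 1)))) :
    ∫⁻ ω, (⨆ s : {s : ℝ // 0 < s}, ENNReal.ofReal ‖X s.1 ω‖) ∂P
      ≤ ENNReal.ofReal ((4 / 3) * A) :=
  stmt10_general P X hXmeas hX0 hXcont dX hdX hexp D hD π N hπ0 hπnonneg hπcard hπnet A hA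
    hAsummable
end

section
/- Equality-of-maxima sets of uniformly separated convex functions have measure zero: Let M₁, M₂ : ℝ² → ℝ be convex functions, and suppose there exist constants c₁ > c₂ > 0 such that for every z in the set D of Alexandrov twice-differentiability points of both functions, the Hessians satisfy (1/2)w^⊤ H₁(z) w ≥ c₁‖w‖² and (1/2)w^⊤ H₂(z) w ≤ c₂‖w‖² for all w ∈ ℝ². Then the set I = { z ∈ ℝ² : M₁(z) = M₂(z) } has Lebesgue measure zero. -/
open MeasureTheory Set Asymptotics Filter Topology Metric
open scoped RealInnerProductSpace

/-!
At a common Alexandrov point `z` of `M₁` and `M₂`, the difference `g = M₁ - M₂` has a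
second-order expansion `g (z + w) = g z + ⟪v, w⟫ + q w + o(‖w‖²)` with `q w ≥ (c₁ - c₂)‖w‖²`.
If `g` vanishes at `z`, `z + w` and `z - w`, adding the two expansions kills the linear term and
forces `w = 0` for small `w`. So near such a point the zero set `S` of `g` meets its point
reflection through `z` only in `z`, hence fills at most half of every small ball around `z`.
Hence `z` is not a Lebesgue density point of `S`; but if `S` had positive measure, almost every
point of `S` would be both a density point and an Alexandrov point.
-/

section Expansion

variable {E : Type*} [NormedAddCommGroup E] [InnerProductSpace ℝ E]

theorem eventually_inner_le_of_isLittleO_of_le {g q : E → ℝ} {z v : E} {c : ℝ} (hc : 0 < c)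
    (hq : ∀ w, c * ‖w‖ ^ 2 ≤ q w)
    (hg : (fun w => g (z + w) - g z - ⟪v, w⟫ - q w) =o[𝓝 0] fun w => ‖w‖ ^ 2) :
    ∀ᶠ w in 𝓝 0, g (z + w) ≤ g z → ⟪v, w⟫ ≤ -(c / 2) * ‖w‖ ^ 2 := by
  filter_upwards [hg.def (half_pos hc)] with w hw hle
  rw [Real.norm_eq_abs, norm_pow, norm_norm] at hw
  linarith [neg_abs_le (g (z + w) - g z - ⟪v, w⟫ - q w), hq w]

theorem eventually_eq_zero_of_isLittleO_of_le {g q : E → ℝ} {z v : E} {c : ℝ} (hc : 0 < c)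
    (hq : ∀ w, c * ‖w‖ ^ 2 ≤ q w)
    (hg : (fun w => g (z + w) - g z - ⟪v, w⟫ - q w) =o[𝓝 0] fun w => ‖w‖ ^ 2) :
    ∀ᶠ w in 𝓝 0, g (z + w) ≤ g z → g (z - w) ≤ g z → w = 0 := by
  have h := eventually_inner_le_of_isLittleO_of_le hc hq hg
  have hneg : Tendsto (fun w : E => -w) (𝓝 0) (𝓝 0) := by simpa using tendsto_neg (0 : E)
  filter_upwards [h, hneg.eventually h] with w hw hw' h₁ h₂
  rw [← sub_eq_add_neg, inner_neg_right, norm_neg] at hw'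
  have : c * ‖w‖ ^ 2 ≤ 0 := by linarith [hw h₁, hw' h₂]
  simpa using nonpos_of_mul_nonpos_right this hc

end Expansion

section Density

variable {E : Type*} [NormedAddCommGroup E] [MeasurableSpace E] [BorelSpace E]

theorem two_mul_measure_inter_closedBall_le (μ : Measure E) [μ.IsAddLeftInvariant]
    [μ.IsNegInvariant] [NullSingletonClass μ] {S : Set E} (hS : MeasurableSet S) {z : E} {r : ℝ}
    (h : ∀ w ∈ closedBall 0 r, z + w ∈ S → z - w ∈ S → w = 0) :
    2 * μ (S ∩ closedBall z r) ≤ μ (closedBall z r) := by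
  set B := closedBall z r
  set T : E → E := fun x => z + z - x
  have hT : MeasurePreserving T μ μ := Measure.measurePreserving_sub_left μ (z + z)
  have hTB : T ⁻¹' B = B := by
    ext x
    simp only [T, B, mem_preimage, mem_closedBall, dist_eq_norm]
    rw [← norm_neg, show -(z + z - x - z) = x - z by abel]
  have hSB : MeasurableSet (S ∩ B) := hS.inter isClosed_closedBall.measurableSet
  have hinter : S ∩ B ∩ T ⁻¹' (S ∩ B) ⊆ {z} := by
    rintro x ⟨⟨hxS, hxB⟩, hTxS, -⟩
    have hw : x - z ∈ closedBall 0 r := by rwa [mem_closedBall, dist_zero_right, ← dist_eq_norm]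
    refine sub_eq_zero.mp (h (x - z) hw (by simpa using hxS) ?_)
    simpa [T, sub_sub_eq_add_sub, add_comm] using hTxS
  calc 2 * μ (S ∩ B) = μ (S ∩ B) + μ (T ⁻¹' (S ∩ B)) := by
        rw [two_mul, hT.measure_preimage hSB.nullMeasurableSet]
    _ = μ (S ∩ B ∪ T ⁻¹' (S ∩ B)) := by
        rw [← measure_union_add_inter _ (hT.measurable hSB),
          measure_mono_null hinter (measure_singleton z), add_zero]
    _ ≤ μ B := measure_mono (union_subset inter_subset_right (by
        rw [preimage_inter, hTB]; exact inter_subset_right))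

variable [NormedSpace ℝ E] [FiniteDimensional ℝ E] [Nontrivial E]

theorem measure_eq_zero_of_ae_eventually_add_mem_sub_mem (μ : Measure E) [μ.IsAddHaarMeasure]
    {S : Set E} (hS : MeasurableSet S)
    (h : ∀ᵐ z ∂μ.restrict S, ∀ᶠ w in 𝓝 0, z + w ∈ S → z - w ∈ S → w = 0) : μ S = 0 := by
  by_contra hμS
  have : (ae (μ.restrict S)).NeBot := ae_neBot.mpr fun h0 => hμS (Measure.restrict_eq_zero.mp h0)
  obtain ⟨z, hz_density, hz⟩ := ((Besicovitch.ae_tendsto_measure_inter_div μ S).and h).exists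
  obtain ⟨δ, hδ, hball⟩ := eventually_nhds_iff_ball.mp hz
  have hhalf : ∀ᶠ r in 𝓝[>] (0 : ℝ), μ (S ∩ closedBall z r) / μ (closedBall z r) ≤ 2⁻¹ := by
    filter_upwards [Ioo_mem_nhdsGT hδ] with r hr
    refine ENNReal.div_le_of_le_mul ?_
    rw [← ENNReal.div_eq_inv_mul, ENNReal.le_div_iff_mul_le (by simp) (by simp), mul_comm]
    exact two_mul_measure_inter_closedBall_le μ hS fun w hw => hball w
      (closedBall_subset_ball hr.2 hw)
  have : (1 : ENNReal) ≤ 2⁻¹ := le_of_tendsto hz_density hhalf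
  norm_num at this

end Density

theorem stmt17_general (M₁ M₂ : EuclideanSpace ℝ (Fin 2) → ℝ)
    (hM₁ : ConvexOn ℝ Set.univ M₁) (hM₂ : ConvexOn ℝ Set.univ M₂)
    (c₁ c₂ : ℝ) (hc : c₁ > c₂)
    (D : Set (EuclideanSpace ℝ (Fin 2)))
    (hD : volume Dᶜ = 0)
    (hexp₁ : ∀ z ∈ D, ∃ (v : EuclideanSpace ℝ (Fin 2))
        (H : EuclideanSpace ℝ (Fin 2) →L[ℝ] EuclideanSpace ℝ (Fin 2)),
      ((fun w => M₁ (z + w) - M₁ z - ⟪v, w⟫ - (1 / 2) * ⟪w, H w⟫)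
          =o[nhds 0] fun w => ‖w‖ ^ 2)
        ∧ ∀ w, c₁ * ‖w‖ ^ 2 ≤ (1 / 2) * ⟪w, H w⟫)
    (hexp₂ : ∀ z ∈ D, ∃ (v : EuclideanSpace ℝ (Fin 2))
        (H : EuclideanSpace ℝ (Fin 2) →L[ℝ] EuclideanSpace ℝ (Fin 2)),
      ((fun w => M₂ (z + w) - M₂ z - ⟪v, w⟫ - (1 / 2) * ⟪w, H w⟫)
          =o[nhds 0] fun w => ‖w‖ ^ 2)
        ∧ ∀ w, (1 / 2) * ⟪w, H w⟫ ≤ c₂ * ‖w‖ ^ 2) :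
    volume {z : EuclideanSpace ℝ (Fin 2) | M₁ z = M₂ z} = 0 := by
  have hS : MeasurableSet {z | M₁ z = M₂ z} :=
    (isClosed_eq (continuousOn_univ.mp (hM₁.continuousOn isOpen_univ))
      (continuousOn_univ.mp (hM₂.continuousOn isOpen_univ))).measurableSet
  refine measure_eq_zero_of_ae_eventually_add_mem_sub_mem volume hS ?_
  filter_upwards [ae_restrict_of_ae hD, ae_restrict_mem hS] with z hzD hzS
  obtain ⟨v₁, H₁, ho₁, hH₁⟩ := hexp₁ z hzD
  obtain ⟨v₂, H₂, ho₂, hH₂⟩ := hexp₂ z hzD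
  have ho : (fun w => (M₁ - M₂) (z + w) - (M₁ - M₂) z - ⟪v₁ - v₂, w⟫
      - ((1 / 2) * ⟪w, H₁ w⟫ - (1 / 2) * ⟪w, H₂ w⟫)) =o[𝓝 0] fun w => ‖w‖ ^ 2 :=
    (ho₁.sub ho₂).congr_left fun w => by simp only [Pi.sub_apply, inner_sub_left]; ring
  filter_upwards [eventually_eq_zero_of_isLittleO_of_le (sub_pos.mpr hc)
    (fun w => by linarith [hH₁ w, hH₂ w]) ho] with w hw hplus hminus
  exact hw (by simp [hplus, hzS]) (by simp [hminus, hzS])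

/-- Equality sets of uniformly separated convex functions have measure zero: if `M₁, M₂` are
convex on `ℝ²` and at every Alexandrov point `z ∈ D` (with `Dᶜ` Lebesgue-null) they admit
second-order expansions whose Hessian quadratic forms satisfy `(1/2)wᵀH₁(z)w ≥ c₁‖w‖²` and
`(1/2)wᵀH₂(z)w ≤ c₂‖w‖²` with `c₁ > c₂ > 0`, then `{z : M₁ z = M₂ z}` is Lebesgue-null. -/
theorem stmt17 (M₁ M₂ : EuclideanSpace ℝ (Fin 2) → ℝ)
    (hM₁ : ConvexOn ℝ Set.univ M₁) (hM₂ : ConvexOn ℝ Set.univ M₂)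
    (c₁ c₂ : ℝ) (hc : c₁ > c₂) (hc₂ : c₂ > 0)
    (D : Set (EuclideanSpace ℝ (Fin 2)))
    (hD : volume Dᶜ = 0)
    (hexp₁ : ∀ z ∈ D, ∃ (v : EuclideanSpace ℝ (Fin 2))
        (H : EuclideanSpace ℝ (Fin 2) →L[ℝ] EuclideanSpace ℝ (Fin 2)),
      ((fun w => M₁ (z + w) - M₁ z - ⟪v, w⟫ - (1 / 2) * ⟪w, H w⟫)
          =o[nhds 0] fun w => ‖w‖ ^ 2)
        ∧ ∀ w, c₁ * ‖w‖ ^ 2 ≤ (1 / 2) * ⟪w, H w⟫)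
    (hexp₂ : ∀ z ∈ D, ∃ (v : EuclideanSpace ℝ (Fin 2))
        (H : EuclideanSpace ℝ (Fin 2) →L[ℝ] EuclideanSpace ℝ (Fin 2)),
      ((fun w => M₂ (z + w) - M₂ z - ⟪v, w⟫ - (1 / 2) * ⟪w, H w⟫)
          =o[nhds 0] fun w => ‖w‖ ^ 2)
        ∧ ∀ w, (1 / 2) * ⟪w, H w⟫ ≤ c₂ * ‖w‖ ^ 2) :
    volume {z : EuclideanSpace ℝ (Fin 2) | M₁ z = M₂ z} = 0 :=
  stmt17_general M₁ M₂ hM₁ hM₂ c₁ c₂ hc D hD hexp₁ hexp₂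
end

section
/- Local C¹ selection of the argmax: Let S : ℝ × (0,∞) → ℝ be twice continuously differentiable. Suppose at (t₀, s₀): ∂S/∂s(t₀,s₀) = 0 and ∂²S/∂s²(t₀,s₀) ≠ 0, s₀ is the unique global maximizer of S(t₀,·), the set-valued map σ(t) = argmax_{s>0} S(t,s) is upper hemicontinuous at t₀, and σ(t) is a singleton for all t in a dense subset Q of a neighborhood of t₀. Then there exist δ > 0 and a unique continuously differentiable function r : (t₀-δ, t₀+δ) → (0,∞) with r(t₀) = s₀, ∂S/∂s(t, r(t)) = 0 for all t, r(t) = σ(t) for t ∈ Q ∩ (t₀-δ,t₀+δ), and r(t) ∈ σ(t) for all t ∈ (t₀-δ,t₀+δ). -/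
/-!
The implicit function theorem, applied to `∂S/∂s` at `(t₀, s₀)`, gives a `C¹` curve `r` of
critical points which, near `(t₀, s₀)`, are the only critical points. Upper hemicontinuity
keeps the maximisers `σ t` for `t` near `t₀` in that neighbourhood, and a positive maximiser is
critical, so `σ t = {r t}` for `t ∈ Q`. The inequalities `S t s ≤ S t (r t)` pass from the
dense set `Q` to every `t` by continuity, and a second such curve agrees with `r` on `Q`, hence
everywhere.
-/

open Set Filter Topology Function

section PartialDeriv

variable {𝕜 : Type*} [NontriviallyNormedField 𝕜]
  {E : Type*} [NormedAddCommGroup E] [NormedSpace 𝕜 E]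
  {F : Type*} [NormedAddCommGroup F] [NormedSpace 𝕜 F]
  {f : E → 𝕜 → F} {p : E × 𝕜}

theorem DifferentiableAt.hasDerivAt_uncurry_snd (hf : DifferentiableAt 𝕜 (uncurry f) p) :
    HasDerivAt (f p.1) (fderiv 𝕜 (uncurry f) p (0, 1)) p.2 := by
  have hslice : HasDerivAt (fun y => (p.1, y)) ((0 : E), (1 : 𝕜)) p.2 :=
    (hasDerivAt_const p.2 p.1).prodMk (hasDerivAt_id p.2)
  exact hf.hasFDerivAt.comp_hasDerivAt p.2 hslice

theorem ContDiffAt.deriv_uncurry_snd {m n : WithTop ℕ∞} (hf : ContDiffAt 𝕜 n (uncurry f) p)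
    (hmn : m + 1 ≤ n) : ContDiffAt 𝕜 m (fun q : E × 𝕜 => deriv (f q.1) q.2) p := by
  have hdiff : ∀ᶠ q in 𝓝 p, DifferentiableAt 𝕜 (uncurry f) q :=
    ((hf.of_le (le_add_self.trans hmn)).eventually (by simp)).mono
      fun q hq => hq.differentiableAt one_ne_zero
  refine ((hf.fderiv_right hmn).clm_apply
    (contDiffAt_const (c := ((0 : E), (1 : 𝕜))))).congr_of_eventuallyEq ?_
  filter_upwards [hdiff] with q hq using hq.hasDerivAt_uncurry_snd.deriv

end PartialDeriv

theorem ContinuousLinearMap.isInvertible_of_apply_one_ne_zero {𝕜 : Type*}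
    [NontriviallyNormedField 𝕜] {L : 𝕜 →L[𝕜] 𝕜} (h : L 1 ≠ 0) : L.IsInvertible :=
  ⟨.unitsEquivAut 𝕜 (.mk0 _ h), ContinuousLinearMap.ext_ring (by simp)⟩

theorem exists_implicitFunction_of_deriv_ne_zero {𝕜 : Type*} [RCLike 𝕜]
    {E : Type*} [NormedAddCommGroup E] [NormedSpace 𝕜 E] [CompleteSpace E]
    {f : E → 𝕜 → 𝕜} {x₀ : E} {y₀ : 𝕜} {n : WithTop ℕ∞}
    (hf : ContDiffAt 𝕜 n (uncurry f) (x₀, y₀)) (hn : n ≠ 0) (hd : deriv (f x₀) y₀ ≠ 0) :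
    ∃ ψ : E → 𝕜, ψ x₀ = y₀ ∧ ContDiffAt 𝕜 n ψ x₀ ∧ ∃ V : Set 𝕜, IsOpen V ∧ y₀ ∈ V ∧
      ∀ᶠ x in 𝓝 x₀, ψ x ∈ V ∧ ∀ y ∈ V, (f x y = f x₀ y₀ ↔ ψ x = y) := by
  have hinv : (fderiv 𝕜 (uncurry f) (x₀, y₀) ∘L .inr 𝕜 E 𝕜).IsInvertible := by
    refine ContinuousLinearMap.isInvertible_of_apply_one_ne_zero ?_
    rwa [ContinuousLinearMap.comp_apply, ContinuousLinearMap.inr_apply,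
      ← ((hf.differentiableAt hn).hasDerivAt_uncurry_snd).deriv]
  have hψ₀ : _ = y₀ := hf.implicitFunction_apply_self hn hinv
  have hψ := hf.contDiffAt_implicitFunction hn hinv
  have hψeq := hf.eventually_apply_eq_iff_implicitFunction hn hinv
  generalize hf.implicitFunction hn hinv = ψ at hψ₀ hψ hψeq
  obtain ⟨W, V, hW, hx₀W, hV, hy₀V, hWV⟩ := mem_nhds_prod_iff'.1 hψeq
  refine ⟨ψ, hψ₀, hψ, V, hV, hy₀V, ?_⟩
  filter_upwards [hW.mem_nhds hx₀W, hψ.continuousAt.eventually_mem (hψ₀ ▸ hV.mem_nhds hy₀V)]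
    with x hx hψx
  exact ⟨hψx, fun y hy => hWV (mk_mem_prod hx hy)⟩

def argmaxPos (f : ℝ → ℝ) : Set ℝ :=
  {s | 0 < s ∧ ∀ s', 0 < s' → f s' ≤ f s}

theorem deriv_eq_zero_of_mem_argmaxPos {f : ℝ → ℝ} {s : ℝ} (hs : s ∈ argmaxPos f) :
    deriv f s = 0 :=
  (IsMaxOn.isLocalMax (isMaxOn_iff.2 hs.2) (Ioi_mem_nhds hs.1)).deriv_eq_zero

theorem Dense.le_on_of_le_on_inter {X α : Type*} [TopologicalSpace X] [TopologicalSpace α]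
    [Preorder α] [OrderClosedTopology α] {I Q : Set X} {f g : X → α} (hQ : Dense Q)
    (hI : IsOpen I) (hf : ContinuousOn f I) (hg : ContinuousOn g I)
    (h : ∀ x ∈ Q ∩ I, f x ≤ g x) : ∀ x ∈ I, f x ≤ g x := fun x hx =>
  ((hf x hx).mono inter_subset_left).closure_le (hQ.open_subset_closure_inter hI hx)
    ((hg x hx).mono inter_subset_left) fun y hy => h y ⟨hy.2, hy.1⟩

theorem mem_argmaxPos_of_dense {X : Type*} [TopologicalSpace X] {S : X → ℝ → ℝ} {r : X → ℝ}
    {I Q : Set X} (hS : ContinuousOn (uncurry S) (univ ×ˢ Ioi 0)) (hI : IsOpen I)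
    (hQ : Dense Q) (hr : ContinuousOn r I) (hr_pos : ∀ t ∈ I, 0 < r t)
    (hQr : ∀ t ∈ Q ∩ I, r t ∈ argmaxPos (S t)) : ∀ t ∈ I, r t ∈ argmaxPos (S t) := by
  refine fun t ht => ⟨hr_pos t ht, fun s hs => ?_⟩
  refine hQ.le_on_of_le_on_inter (f := (S · s)) (g := fun t => S t (r t)) hI ?_ ?_
    (fun x hx => (hQr x hx).2 s hs) t ht
  · exact hS.comp (continuousOn_id.prodMk continuousOn_const) fun _ _ => ⟨mem_univ _, hs⟩
  · exact hS.comp (continuousOn_id.prodMk hr) fun x hx => ⟨mem_univ x, hr_pos x hx⟩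

theorem exists_critical_curve {E : Type*} [NormedAddCommGroup E] [NormedSpace ℝ E]
    [CompleteSpace E] {S : E → ℝ → ℝ} {t₀ : E} {s₀ : ℝ}
    (hS : ContDiffAt ℝ 2 (uncurry S) (t₀, s₀)) (hs₀ : 0 < s₀) (hcrit : deriv (S t₀) s₀ = 0)
    (hnondeg : deriv (deriv (S t₀)) s₀ ≠ 0) :
    ∃ r : E → ℝ, r t₀ = s₀ ∧ ∃ V : Set ℝ, IsOpen V ∧ s₀ ∈ V ∧ ∀ᶠ t in 𝓝 t₀,
      ContDiffAt ℝ 1 r t ∧ 0 < r t ∧ deriv (S t) (r t) = 0 ∧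
        ∀ s ∈ V, deriv (S t) s = 0 → r t = s := by
  obtain ⟨r, hr₀, hr, V, hV, hs₀V, hrV⟩ := exists_implicitFunction_of_deriv_ne_zero
    (f := fun t s => deriv (S t) s) (hS.deriv_uncurry_snd le_rfl) one_ne_zero hnondeg
  refine ⟨r, hr₀, V, hV, hs₀V, ?_⟩
  filter_upwards [hr.eventually (by simp), hr.continuousAt.eventually (lt_mem_nhds (hr₀ ▸ hs₀)),
    hcrit ▸ hrV] with t hrt hpos ⟨hrtV, huniq⟩
  exact ⟨hrt, hpos, (huniq (r t) hrtV).2 rfl, fun s hs => (huniq s hs).1⟩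

/-- Local `C¹` selection of the argmax: let `S` be `C²` on `ℝ × (0,∞)`.  Suppose at
`(t₀, s₀)`: `∂S/∂s(t₀,s₀) = 0`, `∂²S/∂s²(t₀,s₀) ≠ 0`, `s₀` is the unique global maximizer
of `S(t₀,·)` over `(0,∞)`, the set-valued map `σ(t) = argmax_{s>0} S(t,s)` is upper
hemicontinuous at `t₀`, and `σ(t)` is a singleton for all `t` in a dense set `Q`.  Then
there are `δ > 0` and a unique continuously differentiable `r : (t₀-δ,t₀+δ) → (0,∞)` with
`r(t₀) = s₀`, `∂S/∂s(t, r(t)) = 0`, `σ(t) = {r(t)}` for `t ∈ Q` near `t₀`, and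
`r(t) ∈ σ(t)` for all `t` near `t₀`. -/
theorem stmt19 (S : ℝ → ℝ → ℝ)
    (hS : ContDiffOn ℝ 2 (fun q : ℝ × ℝ => S q.1 q.2) (Set.univ ×ˢ Set.Ioi 0))
    (t₀ s₀ : ℝ) (hs₀ : 0 < s₀)
    (hcrit : deriv (S t₀) s₀ = 0)
    (hnondeg : deriv (deriv (S t₀)) s₀ ≠ 0)
    (σ : ℝ → Set ℝ)
    (hσ : ∀ t, σ t = {s | 0 < s ∧ ∀ s' : ℝ, 0 < s' → S t s' ≤ S t s})
    (hσt₀ : σ t₀ = {s₀})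
    (huhc : ∀ U : Set ℝ, IsOpen U → σ t₀ ⊆ U →
      ∃ δ > (0:ℝ), ∀ t : ℝ, |t - t₀| < δ → σ t ⊆ U)
    (Q : Set ℝ) (hQ : Dense Q)
    (hsingleton : ∀ t ∈ Q, ∃ s : ℝ, σ t = {s}) :
    ∃ δ > (0:ℝ), ∃ r : ℝ → ℝ,
      (ContDiffOn ℝ 1 r (Set.Ioo (t₀ - δ) (t₀ + δ))
        ∧ r t₀ = s₀
        ∧ (∀ t ∈ Set.Ioo (t₀ - δ) (t₀ + δ), 0 < r t ∧ deriv (S t) (r t) = 0)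
        ∧ (∀ t ∈ Q ∩ Set.Ioo (t₀ - δ) (t₀ + δ), σ t = {r t})
        ∧ (∀ t ∈ Set.Ioo (t₀ - δ) (t₀ + δ), r t ∈ σ t))
      ∧ ∀ r' : ℝ → ℝ,
          (ContDiffOn ℝ 1 r' (Set.Ioo (t₀ - δ) (t₀ + δ))
            ∧ r' t₀ = s₀
            ∧ (∀ t ∈ Set.Ioo (t₀ - δ) (t₀ + δ), 0 < r' t ∧ deriv (S t) (r' t) = 0)
            ∧ (∀ t ∈ Q ∩ Set.Ioo (t₀ - δ) (t₀ + δ), σ t = {r' t})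
            ∧ (∀ t ∈ Set.Ioo (t₀ - δ) (t₀ + δ), r' t ∈ σ t)) →
          ∀ t ∈ Set.Ioo (t₀ - δ) (t₀ + δ), r' t = r t := by
  have hσ' : ∀ t, σ t = argmaxPos (S t) := hσ
  obtain ⟨r, hr₀, V, hV, hs₀V, hr⟩ := exists_critical_curve
    (hS.contDiffAt ((isOpen_univ.prod isOpen_Ioi).mem_nhds ⟨mem_univ t₀, hs₀⟩)) hs₀ hcrit hnondeg
  obtain ⟨ε, hε, huhcV⟩ := huhc V hV (hσt₀ ▸ singleton_subset_iff.2 hs₀V)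
  obtain ⟨δ, hδ, hI⟩ := Metric.eventually_nhds_iff_ball.1
    (hr.and (Metric.eventually_nhds_iff.2 ⟨ε, hε, fun t ht => huhcV t ht⟩))
  rw [Real.ball_eq_Ioo] at hI
  set I := Ioo (t₀ - δ) (t₀ + δ)
  simp only [imp_and, forall_and] at hI
  obtain ⟨⟨hr_diff, hr_pos, hr_crit, hr_uniq⟩, hσV⟩ := hI
  have hr_cont : ContinuousOn r I := fun t ht => (hr_diff t ht).continuousAt.continuousWithinAt
  have hQr : ∀ t ∈ Q ∩ I, σ t = {r t} := by
    rintro t ⟨htQ, ht⟩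
    obtain ⟨s, hs⟩ := hsingleton t htQ
    have hsσ : s ∈ σ t := hs ▸ mem_singleton s
    rw [hs, hr_uniq t ht s (hσV t ht hsσ) (deriv_eq_zero_of_mem_argmaxPos (hσ' t ▸ hsσ))]
  refine ⟨δ, hδ, r, ⟨fun t ht => (hr_diff t ht).contDiffWithinAt, hr₀,
    fun t ht => ⟨hr_pos t ht, hr_crit t ht⟩, hQr, fun t ht => ?_⟩, ?_⟩
  · rw [hσ']
    refine mem_argmaxPos_of_dense hS.continuousOn isOpen_Ioo hQ hr_cont hr_pos
      (fun t ht => ?_) t ht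
    exact hσ' t ▸ hQr t ht ▸ mem_singleton (r t)
  · rintro r' ⟨hr', -, -, hr'Q, -⟩
    refine EqOn.of_subset_closure (s := Q ∩ I) (fun t ht => ?_) hr'.continuousOn hr_cont
      inter_subset_right ?_
    · exact singleton_eq_singleton_iff.1 ((hr'Q t ht).symm.trans (hQr t ht))
    · simpa only [inter_comm] using hQ.open_subset_closure_inter isOpen_Ioo
end
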